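/- Let p₀ be a probability density on ℝ^d, let r : ℝ^d → [0,∞) be measurable with 0 < ∫ r(x) p₀(x) dx < ∞, and let t ∈ (0,1). Then the conditional reward ρ_t is differentiable on ℝ^d and, for every y ∈ ℝ^d, ∇ρ_t(y) = ρ_t(y) · (∇ log q_t^r(y) − ∇ log q_t(y)). That is, the gradient of the conditional reward equals the conditional reward times the difference between the score of the reward-reweighted smoothed density and the score of the original smoothed density. -/

import Mathlib

open MeasureTheory Real

/-- The Gaussian kernel `G_t(y,x) = (2π(1−t))^{−d/2} exp(−‖y−√t·x‖²/(2(1−t)))`. -/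
noncomputable def gaussKernel (d : ℕ) (t : ℝ) (y x : EuclideanSpace ℝ (Fin d)) : ℝ :=
  (2 * π * (1 - t)) ^ (-(d : ℝ) / 2) *
    Real.exp (-‖y - Real.sqrt t • x‖ ^ 2 / (2 * (1 - t)))

/-- The smoothed density `q_t(y) = ∫ p₀(x) G_t(y,x) dx`. -/
noncomputable def smoothed (d : ℕ) (p₀ : EuclideanSpace ℝ (Fin d) → ℝ) (t : ℝ)
    (y : EuclideanSpace ℝ (Fin d)) : ℝ :=
  ∫ x, p₀ x * gaussKernel d t y x

/-- The posterior density `π_t(x|y) = p₀(x) G_t(y,x)/q_t(y)`. -/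
noncomputable def post (d : ℕ) (p₀ : EuclideanSpace ℝ (Fin d) → ℝ) (t : ℝ)
    (x y : EuclideanSpace ℝ (Fin d)) : ℝ :=
  p₀ x * gaussKernel d t y x / smoothed d p₀ t y

/-- The conditional reward `ρ_t(y) = ∫ r(x) π_t(x|y) dx`. -/
noncomputable def condReward (d : ℕ) (p₀ r : EuclideanSpace ℝ (Fin d) → ℝ) (t : ℝ)
    (y : EuclideanSpace ℝ (Fin d)) : ℝ :=
  ∫ x, r x * post d p₀ t x y

/-- The reward-reweighted density `p₀^r(x) = r(x)p₀(x)/∫ r p₀`. -/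
noncomputable def reweighted (d : ℕ) (p₀ r : EuclideanSpace ℝ (Fin d) → ℝ)
    (x : EuclideanSpace ℝ (Fin d)) : ℝ :=
  r x * p₀ x / ∫ x', r x' * p₀ x'

/-- A probability density on `ℝ^d`: measurable, nonnegative, integrating to one. -/
def IsDensity {d : ℕ} (p : EuclideanSpace ℝ (Fin d) → ℝ) : Prop :=
  Measurable p ∧ (∀ x, 0 ≤ p x) ∧ ∫ x, p x = 1

/-!
Since `r p₀ G_t(y, ·) = (∫ r p₀) · p₀^r G_t(y, ·)`, the conditional reward is the quotient
`ρ_t = (∫ r p₀) · q_t^r / q_t` of two smoothed densities, both positive. The `y`-gradient of the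
Gaussian kernel is bounded uniformly in `x` (as `s ↦ s exp (-s² / 2σ)` is bounded), so each
smoothed density may be differentiated under the integral sign, and the quotient rule written
with logarithmic derivatives gives the identity.
-/

open InnerProductSpace

section GradientCalculus

variable {F : Type*} [NormedAddCommGroup F] [InnerProductSpace ℝ F] [CompleteSpace F]
  {f g : F → ℝ} {f' g' x : F}

theorem HasGradientAt.const_mul (hf : HasGradientAt f f' x) (c : ℝ) :
    HasGradientAt (fun y => c * f y) (c • f') x :=
  (hf.hasFDerivAt.const_mul c).congr_fderiv (map_smul (toDual ℝ F) c f').symm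

theorem HasGradientAt.log (hf : HasGradientAt f f' x) (hx : f x ≠ 0) :
    HasGradientAt (fun y => Real.log (f y)) ((f x)⁻¹ • f') x :=
  (hf.hasFDerivAt.log hx).congr_fderiv (map_smul (toDual ℝ F) _ f').symm

theorem HasGradientAt.div (hf : HasGradientAt f f' x) (hg : HasGradientAt g g' x)
    (hfx : f x ≠ 0) (hgx : g x ≠ 0) :
    HasGradientAt (fun y => f y / g y) ((f x / g x) • ((f x)⁻¹ • f' - (g x)⁻¹ • g')) x := by
  have h := hf.hasFDerivAt.mul ((hasDerivAt_inv hgx).comp_hasFDerivAt x hg.hasFDerivAt)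
  refine (h.congr_fderiv ?_).congr_of_eventuallyEq (.of_forall fun y => div_eq_mul_inv _ _)
  refine ContinuousLinearMap.ext fun w => ?_
  simp only [toDual_apply_apply, add_apply, smul_apply,
    Function.comp_apply, inner_sub_left, real_inner_smul_left, smul_eq_mul]
  field_simp
  ring

end GradientCalculus

theorem Real.mul_exp_neg_sq_div_le {σ : ℝ} (hσ : 0 < σ) (s : ℝ) :
    s * Real.exp (-s ^ 2 / (2 * σ)) ≤ 1 + 2 * σ * Real.exp (-1) := by
  rw [neg_div]
  set u := s ^ 2 / (2 * σ) with hu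
  have hsq : s ^ 2 = 2 * σ * u := by rw [hu]; field_simp
  have hle_one : Real.exp (-u) ≤ 1 := Real.exp_le_one_iff.2 (by rw [neg_nonpos]; positivity)
  calc s * Real.exp (-u) ≤ (1 + s ^ 2) * Real.exp (-u) := by
        gcongr; nlinarith [sq_nonneg (s - 1)]
    _ = Real.exp (-u) + 2 * σ * (u * Real.exp (-u)) := by rw [hsq]; ring
    _ ≤ 1 + 2 * σ * Real.exp (-1) := by gcongr; exact Real.mul_exp_neg_le_exp_neg_one u

section Smoothing

variable {d : ℕ} {t : ℝ}

local notation "E" => EuclideanSpace ℝ (Fin d)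

noncomputable def gradGaussKernel (d : ℕ) (t : ℝ) (y x : EuclideanSpace ℝ (Fin d)) :
    EuclideanSpace ℝ (Fin d) :=
  (-(1 - t)⁻¹ * gaussKernel d t y x) • (y - Real.sqrt t • x)

theorem gaussKernel_pos (ht : t < 1) (y x : E) : 0 < gaussKernel d t y x := by
  unfold gaussKernel
  have : 0 < 2 * π * (1 - t) := by have := Real.pi_pos; nlinarith
  positivity

theorem gaussKernel_le (ht : t < 1) (y x : E) :
    gaussKernel d t y x ≤ (2 * π * (1 - t)) ^ (-(d : ℝ) / 2) := by
  have hσ : 0 < 1 - t := by linarith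
  refine mul_le_of_le_one_right (by positivity) (Real.exp_le_one_iff.2 ?_)
  rw [neg_div, neg_nonpos]
  positivity

theorem continuous_gaussKernel (y : E) : Continuous (fun x => gaussKernel d t y x) := by
  unfold gaussKernel; fun_prop

theorem continuous_gradGaussKernel (y : E) : Continuous (fun x => gradGaussKernel d t y x) := by
  unfold gradGaussKernel gaussKernel; fun_prop

theorem hasGradientAt_gaussKernel (x y : E) :
    HasGradientAt (fun z => gaussKernel d t z x) (gradGaussKernel d t y x) y := by
  have h := ((((hasFDerivAt_id y).sub_const (Real.sqrt t • x)).norm_sq.mul_const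
    (-(2 * (1 - t))⁻¹)).exp).const_mul ((2 * π * (1 - t)) ^ (-(d : ℝ) / 2))
  refine (h.congr_fderiv (ContinuousLinearMap.ext fun w => ?_)).congr_of_eventuallyEq
    (.of_forall fun z => ?_)
  · simp only [gradGaussKernel, gaussKernel, toDual_apply_apply, smul_apply,
      ContinuousLinearMap.comp_apply, innerSL_apply_apply, real_inner_smul_left, smul_eq_mul,
      ContinuousLinearMap.id_apply, id, nsmul_eq_mul]
    generalize 1 - t = σ
    ring_nf
  · simp only [gaussKernel, id]
    ring_nf

theorem exists_norm_gradGaussKernel_le (ht : t < 1) :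
    ∃ K, ∀ y x : E, ‖gradGaussKernel d t y x‖ ≤ K := by
  have hσ : 0 < 1 - t := by linarith
  refine ⟨(1 - t)⁻¹ * (2 * π * (1 - t)) ^ (-(d : ℝ) / 2) * (1 + 2 * (1 - t) * Real.exp (-1)),
    fun y x => ?_⟩
  rw [gradGaussKernel, norm_smul, norm_mul, norm_neg, norm_inv, Real.norm_of_nonneg hσ.le,
    Real.norm_of_nonneg (gaussKernel_pos ht y x).le, mul_assoc, mul_assoc]
  refine mul_le_mul_of_nonneg_left ?_ (by positivity)
  rw [gaussKernel, mul_assoc]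
  exact mul_le_mul_of_nonneg_left (by rw [mul_comm]; exact Real.mul_exp_neg_sq_div_le hσ _)
    (by positivity)

theorem integrable_mul_gaussKernel (ht : t < 1) {f : E → ℝ} (hf : Integrable f) (y : E) :
    Integrable (fun x => f x * gaussKernel d t y x) :=
  hf.mul_bdd (continuous_gaussKernel y).aestronglyMeasurable (.of_forall fun x => by
    rw [Real.norm_of_nonneg (gaussKernel_pos ht y x).le]; exact gaussKernel_le ht y x)

theorem smoothed_pos (ht : t < 1) {f : E → ℝ} (hf0 : 0 ≤ f) (hf : Integrable f)
    (hpos : 0 < ∫ x, f x) (y : E) : 0 < smoothed d f t y := by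
  rw [smoothed, integral_pos_iff_support_of_nonneg
    (fun x => mul_nonneg (hf0 x) (gaussKernel_pos ht y x).le) (integrable_mul_gaussKernel ht hf y)]
  rw [integral_pos_iff_support_of_nonneg hf0 hf] at hpos
  rwa [Function.support_mul_of_ne_zero_right _ fun x => (gaussKernel_pos ht y x).ne']

theorem hasGradientAt_smoothed (ht : t < 1) {f : E → ℝ} (hf : Integrable f) (y : E) :
    HasGradientAt (smoothed d f t) (∫ x, f x • gradGaussKernel d t y x) y := by
  obtain ⟨K, hK⟩ := exists_norm_gradGaussKernel_le (d := d) ht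
  have hint : Integrable (fun x => f x • gradGaussKernel d t y x) :=
    hf.smul_bdd K (continuous_gradGaussKernel y).aestronglyMeasurable (.of_forall (hK y))
  have h := hasFDerivAt_integral_of_dominated_of_fderiv_le (x₀ := y) (bound := fun x => ‖f x‖ * K)
    (F' := fun z x => innerSL ℝ (f x • gradGaussKernel d t z x)) Filter.univ_mem
    (.of_forall fun z => (integrable_mul_gaussKernel ht hf z).aestronglyMeasurable)
    (integrable_mul_gaussKernel ht hf y)
    ((innerSL ℝ).continuous.comp_aestronglyMeasurable hint.aestronglyMeasurable)
    (.of_forall fun x z _ => by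
      rw [innerSL_apply_norm, norm_smul]
      exact mul_le_mul_of_nonneg_left (hK z x) (norm_nonneg _))
    (hf.norm.mul_const K)
    (.of_forall fun x z _ => (hasGradientAt_gaussKernel x z).const_mul (f x))
  rw [ContinuousLinearMap.integral_comp_commSL (by simp) (innerSL ℝ) hint] at h
  exact h

theorem condReward_eq_mul_div {p₀ r : E → ℝ} (hC : ∫ x, r x * p₀ x ≠ 0) (y : E) :
    condReward d p₀ r t y =
      (∫ x, r x * p₀ x) * (smoothed d (reweighted d p₀ r) t y / smoothed d p₀ t y) := by
  have hnum : condReward d p₀ r t y =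
      (∫ x, r x * p₀ x * gaussKernel d t y x) / smoothed d p₀ t y := by
    rw [condReward, ← integral_div]
    simp only [post, mul_div_assoc, mul_assoc]
  have hrew : smoothed d (reweighted d p₀ r) t y =
      (∫ x, r x * p₀ x * gaussKernel d t y x) / ∫ x, r x * p₀ x := by
    rw [smoothed, ← integral_div]
    simp only [reweighted, div_mul_eq_mul_div]
  rw [hnum, hrew, mul_div_assoc', mul_div_cancel₀ _ hC]

theorem integral_reweighted {p₀ r : E → ℝ} (hC : ∫ x, r x * p₀ x ≠ 0) :
    ∫ x, reweighted d p₀ r x = 1 := by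
  simp only [reweighted, integral_div]
  exact div_self hC

end Smoothing

theorem stmt_3_general {d : ℕ} (p₀ r : EuclideanSpace ℝ (Fin d) → ℝ)
    (hp : IsDensity p₀) (hr0 : ∀ x, 0 ≤ r x)
    (hrpos : 0 < ∫ x, r x * p₀ x) (hri : Integrable (fun x => r x * p₀ x))
    (t : ℝ) (ht : t ∈ Set.Ioo (0 : ℝ) 1) :
    ∀ y : EuclideanSpace ℝ (Fin d),
      HasGradientAt (fun z => condReward d p₀ r t z)
        (condReward d p₀ r t y •
          (gradient (fun z => Real.log (smoothed d (reweighted d p₀ r) t z)) y -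
            gradient (fun z => Real.log (smoothed d p₀ t z)) y)) y := by
  intro y
  obtain ⟨-, hp0, hp1⟩ := hp
  have hpi : Integrable p₀ := .of_integral_ne_zero (by rw [hp1]; exact one_ne_zero)
  have hwi : Integrable (reweighted d p₀ r) := hri.div_const _
  have hw0 : 0 ≤ reweighted d p₀ r := fun x => div_nonneg (mul_nonneg (hr0 x) (hp0 x)) hrpos.le
  have hq := smoothed_pos ht.2 hp0 hpi (by simp [hp1]) y
  have hqr := smoothed_pos ht.2 hw0 hwi (by simp [integral_reweighted hrpos.ne']) y
  have hgq := hasGradientAt_smoothed (d := d) ht.2 hpi y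
  have hgqr := hasGradientAt_smoothed (d := d) ht.2 hwi y
  rw [(hgq.log hq.ne').gradient, (hgqr.log hqr.ne').gradient,
    funext (condReward_eq_mul_div hrpos.ne'), mul_smul]
  exact (hgqr.div hgq hqr.ne' hq.ne').const_mul _

/-- The conditional reward `ρ_t` is differentiable and its gradient equals
`ρ_t(y)·(∇ log q_t^r(y) − ∇ log q_t(y))`, where `q_t^r` is the smoothed density of the
reward-reweighted data density. -/
theorem stmt_3 {d : ℕ} (hd : 1 ≤ d) (p₀ r : EuclideanSpace ℝ (Fin d) → ℝ)
    (hp : IsDensity p₀) (hr : Measurable r) (hr0 : ∀ x, 0 ≤ r x)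
    (hrpos : 0 < ∫ x, r x * p₀ x) (hri : Integrable (fun x => r x * p₀ x))
    (t : ℝ) (ht : t ∈ Set.Ioo (0 : ℝ) 1) :
    ∀ y : EuclideanSpace ℝ (Fin d),
      HasGradientAt (fun z => condReward d p₀ r t z)
        (condReward d p₀ r t y •
          (gradient (fun z => Real.log (smoothed d (reweighted d p₀ r) t z)) y -
            gradient (fun z => Real.log (smoothed d p₀ t z)) y)) y :=
  stmt_3_general p₀ r hp hr0 hrpos hri t ht
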